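/- Fix N ≥ 2, weights w₁,…,w_N > 0 with Σᵢ wᵢ = 1, and 0 < χ < 1. Let V : ℝ → ℝ be continuous and coercive (V(x) → +∞ as |x| → ∞), and assume the function x ↦ inf_{y∈ℝ} (w₁ V(y) + w_N V(x + y)) − log|x| is coercive on ℝ. Then the discrete Keller–Segel energy Ẽ_N attains a global minimum on the open set U = {x ∈ ℝ^N : x₁ < x₂ < ⋯ < x_N}; that is, there exists x* ∈ U such that Ẽ_N(x*) ≤ Ẽ_N(x) for all x ∈ U. -/

import Mathlib

/-!
Since `rᵢ ≤ |xᵢ - xⱼ|` and `Σ_{j ≠ i} wⱼ = 1 - wᵢ`, the interaction term is at least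
`χ Σ wᵢ(1 - wᵢ) log rᵢ`, so `Ẽ_N(x) ≥ Σ wᵢ log wᵢ - Σ aᵢ log rᵢ + Σ wᵢ V(xᵢ)` with
`aᵢ = wᵢ(1 - χ(1 - wᵢ)) ∈ (0, wᵢ)`; in particular `Σ aᵢ < 1`. On a sublevel set of `Ẽ_N`:
* the diameter `d = x_N - x₁` is bounded, since every `rᵢ ≤ d` and the two extreme particles
  contribute at least `inf_y (w₁ V(y) + w_N V(d + y))`, which outgrows `log d ≥ Σ aᵢ log d`;
* then every `log rᵢ` is bounded above, so each single term `-aᵢ log rᵢ` and `wᵢ V(xᵢ)` is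
  bounded above, which bounds the gaps from below and, by coercivity of `V`, the positions.
So the sublevel set lies in a compact set of strictly increasing configurations, on which the
continuous energy attains its minimum.
-/

open Real Finset Filter

/-- `rᵢ = min(Δxᵢ, Δxᵢ₊₁)` with the convention `Δx₁ = Δx_{N+1} = +∞`, for `N = n + 2`
particles indexed from `0` to `n+1`. -/
noncomputable def rball (n : ℕ) (x : Fin (n + 2) → ℝ) (i : Fin (n + 2)) : ℝ :=
  if i.val = 0 then x 1 - x 0
  else if i.val = n + 1 then x i - x (i - 1)
  else min (x i - x (i - 1)) (x (i + 1) - x i)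

/-- The one-dimensional discrete modified Keller–Segel energy with confinement `V` and
chemosensitivity `χ`:
`Ẽ_N(x) = Σᵢ wᵢ log(wᵢ/rᵢ) + Σᵢ wᵢ V(xᵢ) + χ Σᵢ Σ_{j≠i} wᵢwⱼ log|xᵢ − xⱼ|`. -/
noncomputable def kellerSegelEnergy (n : ℕ) (w : Fin (n + 2) → ℝ) (V : ℝ → ℝ) (χ : ℝ)
    (x : Fin (n + 2) → ℝ) : ℝ :=
  ∑ i, w i * Real.log (w i / rball n x i) + ∑ i, w i * V (x i) +
    χ * ∑ i, ∑ j ∈ Finset.univ.erase i, w i * w j * Real.log |x i - x j|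

lemma exists_isMinOn_of_sublevel_subset {X α : Type*} [TopologicalSpace X] [LinearOrder α]
    [TopologicalSpace α] [ClosedIicTopology α] {U K : Set X} {f : X → α} (hK : IsCompact K)
    (hKU : K ⊆ U) (hf : ContinuousOn f K) {x₀ : X} (hx₀ : x₀ ∈ U)
    (hsub : ∀ x ∈ U, f x ≤ f x₀ → x ∈ K) : ∃ x ∈ U, IsMinOn f U x := by
  have hx₀K := hsub x₀ hx₀ le_rfl
  obtain ⟨x, hxK, hmin⟩ := hK.exists_isMinOn ⟨x₀, hx₀K⟩ hf
  refine ⟨x, hKU hxK, fun y hy => ?_⟩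
  rcases le_total (f y) (f x₀) with h | h
  · exact hmin (hsub y hy h)
  · exact (hmin hx₀K).trans h

lemma isCompact_setOf_mem_Icc_and_le_sub {ι : Type*} [Finite ι] [LT ι] (R ε : ι → ℝ) :
    IsCompact
      {x : ι → ℝ | (∀ i, x i ∈ Set.Icc (-R i) (R i)) ∧ ∀ i j, i < j → ε i ≤ x j - x i} := by
  refine (isCompact_univ_pi fun i => isCompact_Icc).of_isClosed_subset ?_
    fun x hx i _ => hx.1 i
  simp only [Set.ofPred_and, Set.ofPred_forall]
  exact (isClosed_iInter fun i => isClosed_Icc.preimage (continuous_apply i)).inter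
    (isClosed_iInter fun i => isClosed_iInter fun j => isClosed_iInter fun _ =>
      isClosed_le continuous_const (by fun_prop))

lemma exists_norm_le_of_tendsto_cocompact {E : Type*} [NormedAddCommGroup E] [ProperSpace E]
    {V : E → ℝ} (hV : Tendsto V (cocompact E) atTop) (K : ℝ) :
    ∃ R, ∀ t, V t ≤ K → ‖t‖ ≤ R := by
  have h := hV.eventually_gt_atTop K
  rw [← Metric.cobounded_eq_cocompact] at h
  obtain ⟨R, hR⟩ := (Bornology.isBounded_compl_iff.mpr h).exists_norm_le
  exact ⟨R, fun t ht => hR t (not_lt.mpr ht)⟩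

lemma tendsto_sub_mul_log_atTop {Φ : ℝ → ℝ} {A : ℝ} (hA : A < 1)
    (hΦ : Tendsto (fun t => Φ t - log |t|) (cocompact ℝ) atTop) :
    Tendsto (fun t => Φ t - A * log t) atTop atTop := by
  simp only [log_abs] at hΦ
  refine ((hΦ.mono_left atTop_le_cocompact).atTop_add_atTop
    (tendsto_log_atTop.const_mul_atTop (sub_pos.2 hA))).congr fun t => ?_
  ring

lemma sum_mul_le_sum_mul_add {ι : Type*} [Fintype ι] (s : Finset ι) {w f : ι → ℝ} {M : ℝ}
    (hw : ∀ i, 0 ≤ w i) (hw1 : ∑ i, w i ≤ 1) (hM : 0 ≤ M) (hf : ∀ i, -M ≤ f i) :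
    ∑ i ∈ s, w i * f i ≤ ∑ i, w i * f i + M := by
  have hsub := sum_le_sum_of_subset_of_nonneg (subset_univ s) fun i _ _ =>
    mul_nonneg (hw i) (neg_le_iff_add_nonneg.1 (hf i))
  have hs : 0 ≤ ∑ i ∈ s, w i := sum_nonneg fun i _ => hw i
  simp only [mul_add, sum_add_distrib, ← sum_mul] at hsub
  nlinarith

lemma lt_one_of_sum_eq_one {ι : Type*} [Fintype ι] {w : ι → ℝ} (hw : ∀ i, 0 < w i)
    (hw1 : ∑ i, w i = 1) {i j : ι} (hij : i ≠ j) : w i < 1 :=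
  hw1 ▸ single_lt_sum hij.symm (mem_univ i) (mem_univ j) (hw j) fun k _ _ => (hw k).le

section rball

variable {n : ℕ} {x : Fin (n + 2) → ℝ}

lemma rball_le_sub_of_lt (hx : Monotone x) {i j : Fin (n + 2)} (hij : i < j) :
    rball n x i ≤ x j - x i := by
  have hi : i.val ≠ n + 1 := by have := j.isLt; omega
  have hxj : x (i + 1) ≤ x j := hx <| by
    rw [Fin.le_iff_val_le_val, Fin.val_add_one_of_lt' (by omega)]; omega
  unfold rball
  split_ifs with h0
  · obtain rfl : i = 0 := Fin.ext h0
    simpa using hxj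
  · exact (min_le_right _ _).trans (by linarith)

lemma rball_le_sub_of_lt' (hx : Monotone x) {i j : Fin (n + 2)} (hji : j < i) :
    rball n x i ≤ x i - x j := by
  have hi : i ≠ 0 := Fin.ne_zero_of_lt hji
  have hxj : x j ≤ x (i - 1) := hx <| by
    rw [Fin.le_iff_val_le_val, Fin.val_sub_one_of_ne_zero hi]; omega
  unfold rball
  split_ifs with h0
  · exact absurd (Fin.ext h0) hi
  · linarith
  · exact (min_le_left _ _).trans (by linarith)

lemma rball_le_abs_sub (hx : Monotone x) {i j : Fin (n + 2)} (hij : i ≠ j) :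
    rball n x i ≤ |x i - x j| := by
  rcases hij.lt_or_gt with h | h
  · exact (rball_le_sub_of_lt hx h).trans (by rw [abs_sub_comm]; exact le_abs_self _)
  · exact (rball_le_sub_of_lt' hx h).trans (le_abs_self _)

lemma rball_le_last_sub_zero (hx : Monotone x) (i : Fin (n + 2)) :
    rball n x i ≤ x (Fin.last (n + 1)) - x 0 := by
  rcases (Fin.le_last i).lt_or_eq with h | rfl
  · linarith [rball_le_sub_of_lt hx h, hx (Fin.zero_le i)]
  · exact rball_le_sub_of_lt' hx (Fin.last_pos (n := n))

lemma rball_pos (hx : StrictMono x) (i : Fin (n + 2)) : 0 < rball n x i := by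
  unfold rball
  split_ifs with h0 hl
  · exact sub_pos.2 (hx (by simp))
  all_goals
    have hpred : i - 1 < i :=
      Fin.sub_one_lt_iff.2 (Fin.pos_iff_ne_zero.2 fun h => h0 (by simp [h]))
  · exact sub_pos.2 (hx hpred)
  · have hsucc : i < i + 1 := Fin.lt_add_one_iff.2 (by simp [Fin.lt_def]; omega)
    exact lt_min (sub_pos.2 (hx hpred)) (sub_pos.2 (hx hsucc))

variable (n) in
lemma continuous_rball (i : Fin (n + 2)) :
    Continuous fun x : Fin (n + 2) → ℝ => rball n x i := by
  unfold rball
  split_ifs <;> fun_prop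

end rball

section energy

variable {n : ℕ} {w : Fin (n + 2) → ℝ} {V : ℝ → ℝ} {χ : ℝ} {x : Fin (n + 2) → ℝ}

lemma sum_mul_log_rball_le_interaction (hw : ∀ i, 0 < w i) (hw1 : ∑ i, w i = 1)
    (hx : StrictMono x) :
    ∑ i, w i * (1 - w i) * log (rball n x i) ≤
      ∑ i, ∑ j ∈ univ.erase i, w i * w j * log |x i - x j| := by
  have hsum : ∀ i, ∑ j ∈ univ.erase i, w j = 1 - w i := fun i => by
    rw [sum_erase_eq_sub (mem_univ i), hw1]
  calc ∑ i, w i * (1 - w i) * log (rball n x i)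
      = ∑ i, ∑ j ∈ univ.erase i, w i * w j * log (rball n x i) := by
        simp_rw [← sum_mul, ← mul_sum, hsum]
    _ ≤ ∑ i, ∑ j ∈ univ.erase i, w i * w j * log |x i - x j| := by
        gcongr with i _ j hj
        · exact (mul_pos (hw i) (hw j)).le
        · exact rball_pos hx i
        · exact rball_le_abs_sub hx.monotone (ne_of_mem_erase hj).symm

lemma le_kellerSegelEnergy (hw : ∀ i, 0 < w i) (hw1 : ∑ i, w i = 1) (hχ : 0 ≤ χ)
    (hx : StrictMono x) :
    ∑ i, w i * log (w i) - ∑ i, w i * (1 - χ * (1 - w i)) * log (rball n x i) +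
      ∑ i, w i * V (x i) ≤ kellerSegelEnergy n w V χ x := by
  have hlog (i) : log (w i / rball n x i) = log (w i) - log (rball n x i) :=
    log_div (hw i).ne' (rball_pos hx i).ne'
  calc _ = ∑ i, w i * log (w i) - ∑ i, w i * log (rball n x i) + ∑ i, w i * V (x i) +
        χ * ∑ i, w i * (1 - w i) * log (rball n x i) := by
        simp only [mul_sum, ← sum_sub_distrib, ← sum_add_distrib]
        exact sum_congr rfl fun i _ => by ring
    _ ≤ kellerSegelEnergy n w V χ x := by
        have hentropy : ∑ i, w i * log (w i / rball n x i) =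
            ∑ i, w i * log (w i) - ∑ i, w i * log (rball n x i) := by
          simp only [hlog, mul_sub, sum_sub_distrib]
        rw [kellerSegelEnergy, hentropy]
        gcongr _ + χ * ?_
        exact sum_mul_log_rball_le_interaction hw hw1 hx

lemma continuousOn_kellerSegelEnergy (hw : ∀ i, 0 < w i) (hV : Continuous V) :
    ContinuousOn (kellerSegelEnergy n w V χ) {x | StrictMono x} := by
  have hrball := continuous_rball n
  have hinteraction : ContinuousOn
      (fun x => ∑ i, ∑ j ∈ univ.erase i, w i * w j * log |x i - x j|) {x | StrictMono x} :=
    continuousOn_finsetSum _ fun i _ => continuousOn_finsetSum _ fun j hj => by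
      have hij := (ne_of_mem_erase hj).symm
      fun_prop (disch := exact fun x hx => abs_ne_zero.2 (sub_ne_zero.2 (hx.injective.ne hij)))
  have hentropy (i) : ContinuousOn (fun x => log (w i / rball n x i)) {x | StrictMono x} :=
    ContinuousOn.log (by fun_prop (disch := exact fun x hx => (rball_pos hx i).ne'))
      fun x hx => (div_pos (hw i) (rball_pos hx i)).ne'
  unfold kellerSegelEnergy
  fun_prop

end energy

section coercivity

variable {n : ℕ} {w : Fin (n + 2) → ℝ} {V : ℝ → ℝ} {χ : ℝ}

lemma kellerSegel_exponent_mem_Ioo (hw : ∀ i, 0 < w i) (hw1 : ∑ i, w i = 1) (hχ0 : 0 < χ)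
    (hχ1 : χ < 1) (i : Fin (n + 2)) : w i * (1 - χ * (1 - w i)) ∈ Set.Ioo 0 (w i) := by
  obtain ⟨j, hj⟩ := exists_ne i
  have hwi := hw i
  have hwi1 := lt_one_of_sum_eq_one hw hw1 hj.symm
  have hχw : 0 < χ * (1 - w i) := mul_pos hχ0 (sub_pos.2 hwi1)
  have hχw1 : χ * (1 - w i) < 1 := by nlinarith
  constructor <;> nlinarith

lemma sum_kellerSegel_exponent_lt_one (hw : ∀ i, 0 < w i) (hw1 : ∑ i, w i = 1)
    (hχ0 : 0 < χ) (hχ1 : χ < 1) : ∑ i, w i * (1 - χ * (1 - w i)) < 1 :=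
  (sum_lt_sum_of_nonempty univ_nonempty fun i _ =>
    (kellerSegel_exponent_mem_Ioo hw hw1 hχ0 hχ1 i).2).trans_eq hw1

lemma kellerSegelEnergy_diam_bounded (hw : ∀ i, 0 < w i) (hw1 : ∑ i, w i = 1)
    (hχ0 : 0 < χ) (hχ1 : χ < 1) {M : ℝ} (hM : 0 ≤ M) (hVM : ∀ t, -M ≤ V t)
    (hVW : Tendsto
      (fun t : ℝ => (⨅ y : ℝ, (w 0 * V y + w (Fin.last (n + 1)) * V (t + y))) -
        log |t|) (cocompact ℝ) atTop) (c : ℝ) :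
    ∃ D, ∀ x, StrictMono x → kellerSegelEnergy n w V χ x ≤ c →
      x (Fin.last (n + 1)) - x 0 < D := by
  set a := fun i => w i * (1 - χ * (1 - w i))
  have hA := sum_kellerSegel_exponent_lt_one hw hw1 hχ0 hχ1
  obtain ⟨D, hD⟩ := eventually_atTop.1 <|
    (tendsto_sub_mul_log_atTop hA hVW).eventually_gt_atTop (c - ∑ i, w i * log (w i) + M)
  refine ⟨D, fun x hx hEx => not_le.1 fun hDx => ?_⟩
  set d := x (Fin.last (n + 1)) - x 0
  have hinf : ⨅ y, (w 0 * V y + w (Fin.last (n + 1)) * V (d + y)) ≤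
      w 0 * V (x 0) + w (Fin.last (n + 1)) * V (x (Fin.last (n + 1))) := by
    refine (ciInf_le ⟨w 0 * -M + w (Fin.last (n + 1)) * -M, ?_⟩ (x 0)).trans_eq (by simp [d])
    rintro _ ⟨y, rfl⟩
    exact add_le_add (mul_le_mul_of_nonneg_left (hVM _) (hw _).le)
      (mul_le_mul_of_nonneg_left (hVM _) (hw _).le)
  have hpair : w 0 * V (x 0) + w (Fin.last (n + 1)) * V (x (Fin.last (n + 1))) ≤
      ∑ i, w i * V (x i) + M := by
    simpa [sum_pair (Fin.last_pos (n := n)).ne] using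
      sum_mul_le_sum_mul_add {0, Fin.last (n + 1)} (fun i => (hw i).le) hw1.le hM fun i => hVM (x i)
  have hlog : ∑ i, a i * log (rball n x i) ≤ (∑ i, a i) * log d := by
    rw [sum_mul]
    gcongr with i
    · exact (kellerSegel_exponent_mem_Ioo hw hw1 hχ0 hχ1 i).1.le
    · exact rball_pos hx i
    · exact rball_le_last_sub_zero hx.monotone i
  linarith [hD d hDx, le_kellerSegelEnergy (V := V) hw hw1 hχ0.le hx]

lemma kellerSegelEnergy_sublevel_bounds (hw : ∀ i, 0 < w i) (hw1 : ∑ i, w i = 1)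
    (hχ0 : 0 < χ) (hχ1 : χ < 1) {M : ℝ} (hM : 0 ≤ M) (hVM : ∀ t, -M ≤ V t)
    (hVW : Tendsto
      (fun t : ℝ => (⨅ y : ℝ, (w 0 * V y + w (Fin.last (n + 1)) * V (t + y))) -
        log |t|) (cocompact ℝ) atTop) (c : ℝ) :
    ∃ B, ∀ x, StrictMono x → kellerSegelEnergy n w V χ x ≤ c → ∀ i,
      -B ≤ w i * (1 - χ * (1 - w i)) * log (rball n x i) ∧ w i * V (x i) ≤ B := by
  obtain ⟨D, hD⟩ := kellerSegelEnergy_diam_bounded hw hw1 hχ0 hχ1 hM hVM hVW c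
  set L := log (max D 1)
  have hL : 0 ≤ L := log_nonneg (le_max_right _ _)
  refine ⟨c - ∑ i, w i * log (w i) + M + L, fun x hx hEx i => ?_⟩
  have hlogr (j) : log (rball n x j) ≤ L := log_le_log (rball_pos hx j) <|
    (rball_le_last_sub_zero hx.monotone j).trans ((hD x hx hEx).le.trans (le_max_left _ _))
  have ha (j) := (kellerSegel_exponent_mem_Ioo hw hw1 hχ0 hχ1 j).1.le
  have hA := (sum_kellerSegel_exponent_lt_one hw hw1 hχ0 hχ1).le
  have hlog_sum (s : Finset (Fin (n + 2))) :=
    sum_mul_le_sum_mul_add s ha hA hL fun j => neg_le_neg (hlogr j)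
  have hV_sum (s : Finset (Fin (n + 2))) :=
    sum_mul_le_sum_mul_add s (fun j => (hw j).le) hw1.le hM fun j => hVM (x j)
  have hlog_i := hlog_sum {i}
  have hlog_all := hlog_sum ∅
  have hV_i := hV_sum {i}
  have hV_all := hV_sum ∅
  simp only [sum_singleton, sum_empty, mul_neg, sum_neg_distrib] at hlog_i hlog_all hV_i hV_all
  have := le_kellerSegelEnergy (V := V) hw hw1 hχ0.le hx
  constructor <;> linarith

lemma kellerSegelEnergy_sublevel_subset_isCompact (hw : ∀ i, 0 < w i) (hw1 : ∑ i, w i = 1)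
    (hχ0 : 0 < χ) (hχ1 : χ < 1) {M : ℝ} (hM : 0 ≤ M) (hVM : ∀ t, -M ≤ V t)
    (hVcoer : Tendsto V (cocompact ℝ) atTop)
    (hVW : Tendsto
      (fun t : ℝ => (⨅ y : ℝ, (w 0 * V y + w (Fin.last (n + 1)) * V (t + y))) -
        log |t|) (cocompact ℝ) atTop) (c : ℝ) :
    ∃ K, IsCompact K ∧ K ⊆ {x | StrictMono x} ∧
      ∀ x, StrictMono x → kellerSegelEnergy n w V χ x ≤ c → x ∈ K := by
  obtain ⟨B, hB⟩ := kellerSegelEnergy_sublevel_bounds hw hw1 hχ0 hχ1 hM hVM hVW c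
  choose R hR using fun i => exists_norm_le_of_tendsto_cocompact hVcoer (B / w i)
  set ε := fun i => exp (-B / (w i * (1 - χ * (1 - w i))))
  refine ⟨_, isCompact_setOf_mem_Icc_and_le_sub R ε,
    fun x hx i j hij => sub_pos.1 ((exp_pos _).trans_le (hx.2 i j hij)),
    fun x hx hEx => ⟨fun i => ?_, fun i j hij => ?_⟩⟩
  · refine abs_le.1 (hR i (x i) ?_)
    rw [le_div_iff₀ (hw i), mul_comm]
    exact (hB x hx hEx i).2
  · refine le_trans ?_ (rball_le_sub_of_lt hx.monotone hij)
    rw [← le_log_iff_exp_le (rball_pos hx i),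
      div_le_iff₀ (kellerSegel_exponent_mem_Ioo hw hw1 hχ0 hχ1 i).1, mul_comm]
    exact (hB x hx hEx i).1

end coercivity

/-- for `N ≥ 2`, positive weights summing to one, `0 < χ < 1`, `V`
continuous and coercive with `x ↦ inf_y (w₁V(y) + w_N V(x+y)) − log|x|` coercive, the
discrete Keller–Segel energy attains a global minimum on the open set of strictly
increasing configurations. -/
theorem kellerSegel_exists_minimiser (n : ℕ) (w : Fin (n + 2) → ℝ)
    (hw : ∀ i, 0 < w i) (hw1 : ∑ i, w i = 1) (χ : ℝ) (hχ0 : 0 < χ) (hχ1 : χ < 1)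
    (V : ℝ → ℝ) (hVcont : Continuous V)
    (hVcoer : Tendsto V (cocompact ℝ) atTop)
    (hVW : Tendsto
      (fun t : ℝ => (⨅ y : ℝ, (w 0 * V y + w (Fin.last (n + 1)) * V (t + y))) -
        Real.log |t|) (cocompact ℝ) atTop) :
    ∃ xstar : Fin (n + 2) → ℝ, StrictMono xstar ∧
      ∀ x : Fin (n + 2) → ℝ, StrictMono x →
        kellerSegelEnergy n w V χ xstar ≤ kellerSegelEnergy n w V χ x := by
  obtain ⟨t₀, ht₀⟩ := hVcont.exists_forall_le hVcoer
  have hVM (t : ℝ) : -|V t₀| ≤ V t := (neg_abs_le _).trans (ht₀ t)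
  have hx₀ : StrictMono fun i : Fin (n + 2) => (i : ℝ) :=
    Nat.strictMono_cast.comp Fin.val_strictMono
  obtain ⟨K, hK, hKU, hsub⟩ := kellerSegelEnergy_sublevel_subset_isCompact hw hw1 hχ0 hχ1
    (abs_nonneg _) hVM hVcoer hVW (kellerSegelEnergy n w V χ fun i => (i : ℝ))
  obtain ⟨xstar, hxstar, hmin⟩ := exists_isMinOn_of_sublevel_subset hK hKU
    ((continuousOn_kellerSegelEnergy hw hVcont).mono hKU) hx₀ hsub
  exact ⟨xstar, hxstar, fun x hx => hmin hx⟩
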